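/- Let Z_• be a green nonlinear stability function and suppose A is Z_s-semistable with μ_s(A)=s, and B is Z_t-semistable with μ_t(B)=t, where s < t. Then Hom_Λ(A, B) = 0. -/

import Mathlib

/-!
If `f : A → B` were nonzero, its image `M` would satisfy `μ_s(M) ≤ s` (see-saw against the
kernel, `A` being semistable of slope `s`), while every nonzero submodule of `B` has `μ_t ≥ t`.
Follow `g_v(ρ) = μ_ρ(v) - ρ` for the finitely many dimension vectors `v` of nonzero submodules
of `M`. At the supremum `w` of the times in `[s, t)` where some `g_v` is `≤ 0`, all `g_v` are
`≥ 0` and one of them vanishes, so the corresponding submodule is `Z_w`-semistable with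
`μ_w = w`. Greenness makes that `g_v` cross zero downwards at `w`, which contradicts the choice
of `w`.
-/

open scoped BigOperators

noncomputable section

/-- Dot product of a real vector with a dimension vector. -/
def dprod {n : ℕ} (x : Fin n → ℝ) (v : Fin n → ℕ) : ℝ := ∑ i, x i * (v i : ℝ)

/-- Slope of a dimension vector with respect to a linear stability function
`Z(x) = a·x + i b·x`. -/
def zslope {n : ℕ} (a b : Fin n → ℝ) (v : Fin n → ℕ) : ℝ := dprod a v / dprod b v

/-- The semistability set `D(M)` of a module `M`, with respect to a dimension-vector
assignment `d`. -/
def DSet {Λ : Type} [Ring Λ] {n : ℕ}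
    (d : (N : Type) → [AddCommGroup N] → [Module Λ N] → Fin n → ℕ)
    (M : Type) [AddCommGroup M] [Module Λ M] : Set (Fin n → ℝ) :=
  {x | dprod x (d M) = 0 ∧ ∀ M' : Submodule Λ M, dprod x (d ↥M') ≤ 0}

/-- A module is Schurian if it is nonzero and every nonzero endomorphism is invertible,
i.e. its endomorphism ring is a division algebra. -/
def Schurian (Λ : Type) [Ring Λ] (M : Type) [AddCommGroup M] [Module Λ M] : Prop :=
  (∃ y : M, y ≠ 0) ∧ ∀ f : M →ₗ[Λ] M, f ≠ 0 → Function.Bijective f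

/-- `X` belongs to `E(M)`: `X` admits a finite filtration with all subquotients
isomorphic to `M`. -/
def IsFiltered (Λ : Type) [Ring Λ] (M : Type) [AddCommGroup M] [Module Λ M]
    (X : Type) [AddCommGroup X] [Module Λ X] : Prop :=
  ∃ (k : ℕ) (F : Fin (k + 1) → Submodule Λ X), Monotone F ∧ F 0 = ⊥ ∧ F (Fin.last k) = ⊤ ∧
    ∀ i : Fin k, Nonempty
      ((↥(F i.succ) ⧸ Submodule.comap (F i.succ).subtype (F i.castSucc)) ≃ₗ[Λ] M)

/-- Slope at time `t` of a dimension vector, for a nonlinear stability function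
`Z_t(x) = a_t·x + i b_t·x`. -/
def muZ {n : ℕ} (a b : ℝ → Fin n → ℝ) (t : ℝ) (v : Fin n → ℕ) : ℝ :=
  dprod (a t) v / dprod (b t) v

/-- `M` is `Z_t`-semistable: every nonzero submodule has zslope at least that of `M`. -/
def Semistable {Λ : Type} [Ring Λ] {n : ℕ}
    (d : (N : Type) → [AddCommGroup N] → [Module Λ N] → Fin n → ℕ)
    (a b : ℝ → Fin n → ℝ) (t : ℝ)
    (M : Type) [AddCommGroup M] [Module Λ M] : Prop :=
  ∀ M' : Submodule Λ M, M' ≠ ⊥ → muZ a b t (d M) ≤ muZ a b t (d ↥M')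

/-- The nonlinear stability function given by `(a, b)` is green (for `Λ`): at every
semistable pair `(N, t₀)` (with `N` a nonzero finite-length `Λ`-module, `N`
`Z_{t₀}`-semistable and `μ_{t₀}(N) = t₀`), the derivative of `t ↦ μ_t(N)` at `t₀`
is `< 1`. -/
def ZGreen {Λ : Type} [Ring Λ] {n : ℕ}
    (d : (N : Type) → [AddCommGroup N] → [Module Λ N] → Fin n → ℕ)
    (a b : ℝ → Fin n → ℝ) : Prop :=
  ∀ (N : Type) [AddCommGroup N] [Module Λ N] [IsNoetherian Λ N] [IsArtinian Λ N] (t₀ : ℝ),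
    (∃ y : N, y ≠ 0) → Semistable d a b t₀ N → muZ a b t₀ (d N) = t₀ →
      deriv (fun t => muZ a b t (d N)) t₀ < 1

/-- `t₀(M)`: the smallest `t` with `μ_t(M) = t` (as an infimum). -/
def tzero {n : ℕ} (a b : ℝ → Fin n → ℝ) (v : Fin n → ℕ) : ℝ := sInf {t | muZ a b t v = t}

/-- `t₁(M)`: the smallest value of `t₀(M')` over nonzero submodules `M' ⊆ M`. -/
def tone {Λ : Type} [Ring Λ] {n : ℕ}
    (d : (N : Type) → [AddCommGroup N] → [Module Λ N] → Fin n → ℕ)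
    (a b : ℝ → Fin n → ℝ)
    (M : Type) [AddCommGroup M] [Module Λ M] : ℝ :=
  sInf {s : ℝ | ∃ M' : Submodule Λ M, M' ≠ ⊥ ∧ s = tzero a b (d ↥M')}

open Filter Topology Set

theorem Set.Finite.forall_pos_of_forall_nonneg {α : Type*} {V : Set α} (hV : V.Finite)
    {g : α → ℝ → ℝ} {s t : ℝ} (hst : s < t) (hcont : ∀ v ∈ V, Continuous (g v))
    (hcross : ∀ w, ∀ v ∈ V, (∀ u ∈ V, 0 ≤ g u w) → g v w = 0 → deriv (g v) w < 0)
    (ht : ∀ v ∈ V, 0 ≤ g v t) : ∀ v ∈ V, 0 < g v s := by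
  by_contra! hs
  obtain ⟨v₀, hv₀, hs⟩ := hs
  let S : α → Set ℝ := fun v => {ρ | ρ ∈ Ico s t ∧ g v ρ ≤ 0}
  have hne : (⋃ v ∈ V, S v).Nonempty := ⟨s, mem_biUnion hv₀ ⟨⟨le_rfl, hst⟩, hs⟩⟩
  have hbdd : BddAbove (⋃ v ∈ V, S v) :=
    ⟨t, fun ρ hρ => by obtain ⟨v, -, hρ⟩ := mem_iUnion₂.1 hρ; exact hρ.1.2.le⟩
  set w := sSup (⋃ v ∈ V, S v)
  have hle : ∀ v ∈ V, ∀ ρ ∈ S v, ρ ≤ w := fun v hv ρ hρ => le_csSup hbdd (mem_biUnion hv hρ)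
  have hsw : s ≤ w := hle v₀ hv₀ s ⟨⟨le_rfl, hst⟩, hs⟩
  have hwt : w ≤ t := csSup_le hne fun ρ hρ => by
    obtain ⟨v, -, hρ⟩ := mem_iUnion₂.1 hρ; exact hρ.1.2.le
  have hnonneg : ∀ u ∈ V, 0 ≤ g u w := by
    intro u hu
    by_contra! hneg
    have hwt' : w < t := hwt.lt_of_ne fun h => by rw [h] at hneg; linarith [ht u hu]
    obtain ⟨ρ, ⟨hρneg, hρ⟩, hwρ⟩ :=
      ((((hcont u hu).tendsto w).eventually (gt_mem_nhds hneg)).filter_mono nhdsWithin_le_nhds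
        |>.and (Ioo_mem_nhdsGT hwt') |>.and self_mem_nhdsWithin).exists
    exact (hle u hu ρ ⟨⟨hsw.trans hρ.1.le, hρ.2⟩, hρneg.le⟩).not_gt hρ.1
  obtain ⟨v, hv, hwv⟩ : ∃ v ∈ V, w ∈ closure (S v) := by
    simpa [hV.closure_biUnion] using csSup_mem_closure hne hbdd
  have hzero : g v w = 0 := le_antisymm
    (closure_minimal (fun ρ hρ => hρ.2) (isClosed_le (hcont v hv) continuous_const) hwv)
    (hnonneg v hv)
  have hsign : ∀ᶠ ρ in 𝓝 w, g v ρ ≤ 0 ↔ w ≤ ρ :=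
    (eventually_nhdsWithin_sign_eq_of_deriv_neg (hcross w v hv hnonneg hzero) hzero).mono
      fun ρ h => by rw [← sign_nonpos_iff, h, sign_nonpos_iff, sub_nonpos]
  -- `w` is a limit of times where `g v ≤ 0`, and the sign change of `g v` at `w` puts them
  -- to the right of `w`
  obtain ⟨ρ, hρ, hρsign⟩ := ((mem_closure_iff_frequently.1 hwv).and_eventually hsign).exists
  have hwt' : w < t := (hρsign.1 hρ.2).trans_lt hρ.1.2
  obtain ⟨σ, ⟨hσsign, hσ⟩, hwσ⟩ :=
    (hsign.filter_mono nhdsWithin_le_nhds |>.and (Ioo_mem_nhdsGT hwt') |>.and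
      self_mem_nhdsWithin).exists
  exact (hle v hv σ ⟨⟨hsw.trans hσ.1.le, hσ.2⟩, hσsign.2 hσ.1.le⟩).not_gt hσ.1

section Slopes

variable {n : ℕ}

lemma dprod_add (x : Fin n → ℝ) (u v : Fin n → ℕ) : dprod x (u + v) = dprod x u + dprod x v := by
  simp [dprod, mul_add, Finset.sum_add_distrib]

lemma dprod_nonneg {x : Fin n → ℝ} (hx : ∀ i, 0 ≤ x i) (v : Fin n → ℕ) : 0 ≤ dprod x v :=
  Finset.sum_nonneg fun i _ => mul_nonneg (hx i) (Nat.cast_nonneg _)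

lemma dprod_pos {x : Fin n → ℝ} (hx : ∀ i, 0 < x i) {v : Fin n → ℕ} (hv : v ≠ 0) :
    0 < dprod x v := by
  obtain ⟨i, hi⟩ := Function.ne_iff.mp hv
  exact Finset.sum_pos' (fun j _ => mul_nonneg (hx j).le (Nat.cast_nonneg _))
    ⟨i, Finset.mem_univ i, mul_pos (hx i) (by exact_mod_cast Nat.pos_of_ne_zero hi)⟩

lemma div_dprod_le_of_add {x y : Fin n → ℝ} (hy : ∀ i, 0 < y i) {u v : Fin n → ℕ} {m : ℝ}
    (hv : v ≠ 0) (hu : m * dprod y u ≤ dprod x u)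
    (huv : dprod x (u + v) / dprod y (u + v) = m) : dprod x v / dprod y v ≤ m := by
  have hyv := dprod_pos hy hv
  have hyuv : 0 < dprod y (u + v) := by
    rw [dprod_add]; linarith [dprod_nonneg (fun i => (hy i).le) u]
  rw [div_eq_iff hyuv.ne', dprod_add, dprod_add] at huv
  rw [div_le_iff₀ hyv]
  linarith

lemma differentiable_muZ {a b : ℝ → Fin n → ℝ} (hbpos : ∀ t i, 0 < b t i)
    (ha : ∀ i, Differentiable ℝ fun t => a t i) (hb : ∀ i, Differentiable ℝ fun t => b t i)
    {v : Fin n → ℕ} (hv : v ≠ 0) : Differentiable ℝ fun t => muZ a b t v :=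
  (Differentiable.fun_sum fun i _ => (ha i).mul_const _).fun_div
    (Differentiable.fun_sum fun i _ => (hb i).mul_const _)
    fun t => (dprod_pos (hbpos t) hv).ne'

end Slopes

section Dimension

variable {Λ : Type} [Ring Λ] {n : ℕ}

def DimIsoInvariant (d : (N : Type) → [AddCommGroup N] → [Module Λ N] → Fin n → ℕ) : Prop :=
  ∀ (N N' : Type) [AddCommGroup N] [Module Λ N] [AddCommGroup N'] [Module Λ N']
    [IsNoetherian Λ N] [IsArtinian Λ N], (N ≃ₗ[Λ] N') → d N = d N'

def DimAdditive (d : (N : Type) → [AddCommGroup N] → [Module Λ N] → Fin n → ℕ) : Prop :=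
  ∀ (N : Type) [AddCommGroup N] [Module Λ N] [IsNoetherian Λ N] [IsArtinian Λ N]
    (A : Submodule Λ N), d ↥A + d (N ⧸ A) = d N

def DimDetectsZero (d : (N : Type) → [AddCommGroup N] → [Module Λ N] → Fin n → ℕ) : Prop :=
  ∀ (N : Type) [AddCommGroup N] [Module Λ N] [IsNoetherian Λ N] [IsArtinian Λ N],
    d N = 0 ↔ ∀ y : N, y = 0

variable {d : (N : Type) → [AddCommGroup N] → [Module Λ N] → Fin n → ℕ}
  {N : Type} [AddCommGroup N] [Module Λ N] [IsNoetherian Λ N] [IsArtinian Λ N]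

lemma DimDetectsZero.dim_eq_zero_iff (hzero : DimDetectsZero d) (P : Submodule Λ N) :
    d ↥P = 0 ↔ P = ⊥ := by
  rw [hzero, Submodule.eq_bot_iff]
  exact ⟨fun h x hx => congrArg Subtype.val (h ⟨x, hx⟩), fun h y => Subtype.ext (h y y.2)⟩

lemma DimAdditive.dim_le (hadd : DimAdditive d) (P : Submodule Λ N) : d ↥P ≤ d N :=
  hadd N P ▸ le_self_add

lemma DimIsoInvariant.dim_map_subtype (hiso : DimIsoInvariant d) {P : Submodule Λ N}
    (Q : Submodule Λ P) : d ↥(Q.map P.subtype) = d ↥Q :=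
  (hiso _ _ (Submodule.equivMapOfInjective _ P.injective_subtype Q)).symm

end Dimension

section Stability

variable {Λ : Type} [Ring Λ] {n : ℕ} {d : (N : Type) → [AddCommGroup N] → [Module Λ N] → Fin n → ℕ}
  {a b : ℝ → Fin n → ℝ}

lemma muZ_range_le (hiso : DimIsoInvariant d) (hadd : DimAdditive d) (hzero : DimDetectsZero d)
    (hb : ∀ t i, 0 < b t i) {s : ℝ} {A B : Type} [AddCommGroup A] [Module Λ A]
    [IsNoetherian Λ A] [IsArtinian Λ A] [AddCommGroup B] [Module Λ B]
    [IsNoetherian Λ B] [IsArtinian Λ B]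
    (hA : Semistable d a b s A) {f : A →ₗ[Λ] B} (hf : f ≠ 0) :
    muZ a b s (d ↥(LinearMap.range f)) ≤ muZ a b s (d A) := by
  have hdim : d ↥(LinearMap.ker f) + d ↥(LinearMap.range f) = d A :=
    hiso _ _ f.quotKerEquivRange ▸ hadd A (LinearMap.ker f)
  have hrange : d ↥(LinearMap.range f) ≠ 0 :=
    (hzero.dim_eq_zero_iff _).not.2 (LinearMap.range_eq_bot.not.2 hf)
  refine div_dprod_le_of_add (hb s) hrange ?_ (by rw [hdim]; rfl)
  by_cases hK : LinearMap.ker f = ⊥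
  · simp [(hzero.dim_eq_zero_iff _).2 hK, dprod]
  · have hle := hA _ hK
    unfold muZ at hle ⊢
    rwa [le_div_iff₀ (dprod_pos (hb s) ((hzero.dim_eq_zero_iff _).not.2 hK))] at hle

variable {N : Type} [AddCommGroup N] [Module Λ N] [IsNoetherian Λ N] [IsArtinian Λ N]

lemma semistable_of_forall_le (hiso : DimIsoInvariant d) {P : Submodule Λ N} {w : ℝ}
    (h : ∀ Q ≤ P, Q ≠ ⊥ → muZ a b w (d ↥P) ≤ muZ a b w (d ↥Q)) : Semistable d a b w ↥P :=
  fun Q hQ => hiso.dim_map_subtype Q ▸ h _ (Submodule.map_subtype_le _ _) (by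
    rwa [Ne, ← Submodule.map_bot P.subtype,
      (Submodule.map_injective_of_injective P.injective_subtype).eq_iff])

lemma ZGreen.deriv_muZ_lt_one (hgreen : ZGreen d a b) (hiso : DimIsoInvariant d)
    {P : Submodule Λ N} (hP : P ≠ ⊥) {w : ℝ} (hμ : muZ a b w (d ↥P) = w)
    (hmin : ∀ Q ≤ P, Q ≠ ⊥ → w ≤ muZ a b w (d ↥Q)) :
    deriv (fun t => muZ a b t (d ↥P)) w < 1 :=
  hgreen P w (@exists_ne _ (Submodule.nontrivial_iff_ne_bot.2 hP) 0)
    (semistable_of_forall_le hiso fun Q hQP hQ => hμ.symm ▸ hmin Q hQP hQ) hμ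

end Stability

theorem stmt9_general (Λ : Type) [Ring Λ] {n : ℕ}
    (d : (N : Type) → [AddCommGroup N] → [Module Λ N] → Fin n → ℕ)
    (hiso : ∀ (N N' : Type) [AddCommGroup N] [Module Λ N] [AddCommGroup N'] [Module Λ N']
      [IsNoetherian Λ N] [IsArtinian Λ N], (N ≃ₗ[Λ] N') → d N = d N')
    (hadd : ∀ (N : Type) [AddCommGroup N] [Module Λ N] [IsNoetherian Λ N] [IsArtinian Λ N]
      (A : Submodule Λ N), d ↥A + d (N ⧸ A) = d N)
    (hzero : ∀ (N : Type) [AddCommGroup N] [Module Λ N] [IsNoetherian Λ N] [IsArtinian Λ N],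
      (d N = 0 ↔ ∀ y : N, y = 0))
    (a b : ℝ → Fin n → ℝ)
    (hbpos : ∀ t i, 0 < b t i)
    (hC1a : ∀ i, ContDiff ℝ 1 (fun t => a t i))
    (hC1b : ∀ i, ContDiff ℝ 1 (fun t => b t i))
    (hgreen : ZGreen d a b)
    (A B : Type) [AddCommGroup A] [Module Λ A] [IsNoetherian Λ A] [IsArtinian Λ A]
    [AddCommGroup B] [Module Λ B] [IsNoetherian Λ B] [IsArtinian Λ B]
    (s t : ℝ) (hst : s < t)
    (hAss : Semistable d a b s A) (hAmu : muZ a b s (d A) = s)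
    (hBss : Semistable d a b t B) (hBmu : muZ a b t (d B) = t) :
    ∀ f : A →ₗ[Λ] B, f = 0 := by
  intro f
  by_contra hf
  let V := {v | ∃ P : Submodule Λ B, P ≠ ⊥ ∧ P ≤ LinearMap.range f ∧ d ↥P = v}
  have hV : V.Finite := (Set.finite_Iic (d B)).subset fun v ⟨P, _, _, hP⟩ =>
    hP ▸ DimAdditive.dim_le hadd P
  have hdiff : ∀ v ∈ V, Differentiable ℝ fun ρ => muZ a b ρ v := by
    rintro v ⟨P, hP, -, rfl⟩
    exact differentiable_muZ hbpos (fun i => (hC1a i).differentiable one_ne_zero)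
      (fun i => (hC1b i).differentiable one_ne_zero)
      ((DimDetectsZero.dim_eq_zero_iff hzero P).not.2 hP)
  have hpos := hV.forall_pos_of_forall_nonneg (g := fun v ρ => muZ a b ρ v - ρ) hst
    (fun v hv => (hdiff v hv).continuous.sub continuous_id)
    (by
      rintro w v ⟨P, hP, hPf, rfl⟩ hmin hμ
      have hlt := hgreen.deriv_muZ_lt_one hiso hP (sub_eq_zero.1 hμ) fun Q hQP hQ =>
        sub_nonneg.1 (hmin _ ⟨Q, hQ, hQP.trans hPf, rfl⟩)
      rw [((hdiff _ ⟨P, hP, hPf, rfl⟩ w).hasDerivAt.fun_sub (hasDerivAt_id' w)).deriv]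
      linarith)
    (by
      rintro v ⟨P, hP, -, rfl⟩
      exact sub_nonneg.2 (hBmu.symm.trans_le (hBss P hP)))
    _ ⟨_, LinearMap.range_eq_bot.not.2 hf, le_rfl, rfl⟩
  have hle := muZ_range_le hiso hadd hzero hbpos hAss hf
  linarith

/-- Let `Z_•` be a green nonlinear stability function, `A` `Z_s`-semistable
with `μ_s(A) = s`, `B` `Z_t`-semistable with `μ_t(B) = t`, and `s < t`. Then
`Hom_Λ(A, B) = 0`. -/
theorem stmt9 (Λ : Type) [Ring Λ] {n : ℕ}
    (d : (N : Type) → [AddCommGroup N] → [Module Λ N] → Fin n → ℕ)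
    (hiso : ∀ (N N' : Type) [AddCommGroup N] [Module Λ N] [AddCommGroup N'] [Module Λ N']
      [IsNoetherian Λ N] [IsArtinian Λ N], (N ≃ₗ[Λ] N') → d N = d N')
    (hadd : ∀ (N : Type) [AddCommGroup N] [Module Λ N] [IsNoetherian Λ N] [IsArtinian Λ N]
      (A : Submodule Λ N), d ↥A + d (N ⧸ A) = d N)
    (hzero : ∀ (N : Type) [AddCommGroup N] [Module Λ N] [IsNoetherian Λ N] [IsArtinian Λ N],
      (d N = 0 ↔ ∀ y : N, y = 0))
    (a b : ℝ → Fin n → ℝ)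
    (hbpos : ∀ t i, 0 < b t i)
    (hC1a : ∀ i, ContDiff ℝ 1 (fun t => a t i))
    (hC1b : ∀ i, ContDiff ℝ 1 (fun t => b t i))
    (hconst : ∃ T : ℝ, 0 < T ∧ (∀ t, T ≤ t → a t = a T ∧ b t = b T) ∧
      (∀ t, t ≤ -T → a t = a (-T) ∧ b t = b (-T)))
    (hgreen : ZGreen d a b)
    (A B : Type) [AddCommGroup A] [Module Λ A] [IsNoetherian Λ A] [IsArtinian Λ A]
    [AddCommGroup B] [Module Λ B] [IsNoetherian Λ B] [IsArtinian Λ B]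
    (hA0 : ∃ y : A, y ≠ 0) (hB0 : ∃ y : B, y ≠ 0)
    (s t : ℝ) (hst : s < t)
    (hAss : Semistable d a b s A) (hAmu : muZ a b s (d A) = s)
    (hBss : Semistable d a b t B) (hBmu : muZ a b t (d B) = t) :
    ∀ f : A →ₗ[Λ] B, f = 0 :=
  stmt9_general Λ d hiso hadd hzero a b hbpos hC1a hC1b hgreen A B s t hst hAss hAmu hBss hBmu
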